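/- arXiv:2602.12988 — 2 statements merged into one kernel-verified Lean document; each statement's English description precedes it below -/
import Mathlib

section
/- Let Q ∈ M₊, ν ∈ H and c > 0, and let μ be a probability measure on ℝ^d satisfying the fixed-point equation defining D(cQ, ν). Then μ is Q-selfdecomposable: for every t > 0 there exists a probability measure ρ_t on ℝ^d such that μ̂(z) = μ̂( e^{−t Qᵀ} z ) · ρ̂_t(z) for all z ∈ ℝ^d, where Qᵀ is the transpose of Q and e^{−tQᵀ} is the matrix exponential. -/
open MeasureTheory ProbabilityTheory Matrix Filter Topology

noncomputable section

/-- `s^Q = exp((log s) • Q)`, the matrix power given by the matrix exponential. -/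
def mpow {d : ℕ} (Q : Matrix (Fin d) (Fin d) ℝ) (s : ℝ) : Matrix (Fin d) (Fin d) ℝ :=
  NormedSpace.exp (Real.log s • Q)

/-- Action of the matrix power `s^Q` on Euclidean space by matrix-vector multiplication. -/
def mAct {d : ℕ} (Q : Matrix (Fin d) (Fin d) ℝ) (s : ℝ) (x : EuclideanSpace ℝ (Fin d)) :
    EuclideanSpace ℝ (Fin d) :=
  WithLp.toLp 2 ((mpow Q s).mulVec x)

/-- `Q ∈ M₊`: every complex eigenvalue of `Q` has positive real part. -/
def MPlus {d : ℕ} (Q : Matrix (Fin d) (Fin d) ℝ) : Prop :=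
  ∀ z ∈ (Q.map (algebraMap ℝ ℂ)).charpoly.roots, 0 < z.re

/-- `ν ∈ H`: a probability measure on `ℝ^d` with `∫_{‖x‖>1} log ‖x‖ ν(dx) < ∞`. -/
def ClassH {d : ℕ} (ν : Measure (EuclideanSpace ℝ (Fin d))) : Prop :=
  IsProbabilityMeasure ν ∧
    (∫⁻ x in {x : EuclideanSpace ℝ (Fin d) | 1 < ‖x‖}, ENNReal.ofReal (Real.log ‖x‖) ∂ν) < ⊤

/-- The uniform distribution on `[0,1]`. -/
def unif01 : Measure ℝ := volume.restrict (Set.Icc (0:ℝ) 1)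

/-- The operator Dickman fixed-point equation `D(Q, ν)`: the law of `U^Q (X' + W)` equals `μ`,
where `U ~ Unif[0,1]`, `X' ~ μ`, `W ~ ν` are mutually independent. -/
def IsOpDickman {d : ℕ} (Q : Matrix (Fin d) (Fin d) ℝ)
    (ν μ : Measure (EuclideanSpace ℝ (Fin d))) : Prop :=
  Measure.map (fun p : ℝ × (EuclideanSpace ℝ (Fin d) × EuclideanSpace ℝ (Fin d)) =>
      mAct Q p.1 (p.2.1 + p.2.2)) (unif01.prod (μ.prod ν)) = μ

/-- The scalar Dickman fixed-point equation `D((1/θ)I, ν)` on `ℝ^d`: the law of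
`U^{1/θ} (X' + W)` equals `μ`, for `U ~ Unif[0,1]`, `X' ~ μ`, `W ~ ν` mutually independent. -/
def IsScalarDickman {d : ℕ} (θ : ℝ) (ν μ : Measure (EuclideanSpace ℝ (Fin d))) : Prop :=
  Measure.map (fun p : ℝ × (EuclideanSpace ℝ (Fin d) × EuclideanSpace ℝ (Fin d)) =>
      p.1 ^ (1/θ) • (p.2.1 + p.2.2)) (unif01.prod (μ.prod ν)) = μ

/-- The characteristic function `μ̂(z) = ∫ e^{i z·x} μ(dx)` of a measure on `ℝ^d`. -/
def charFn {d : ℕ} (μ : Measure (EuclideanSpace ℝ (Fin d))) (z : EuclideanSpace ℝ (Fin d)) : ℂ :=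
  ∫ x, Complex.exp (Complex.I * ((inner ℝ z x : ℝ) : ℂ)) ∂μ


open scoped RealInnerProductSpace NNReal

/-!
Along the orbit `s ↦ e^{-sQᵀ} z` write `f(s) = μ̂(e^{-sQᵀ} z)` and `g(s) = ν̂(e^{-sQᵀ} z)`. The
fixed-point equation of `D(cQ, ν)` becomes `f(s) = ∫₀¹ (f g)(s - c log u) du`, and the substitution
`v = u e^{-s/c}` turns it into `e^{-s/c} f(s) = ∫₀^{e^{-s/c}} (f g)(-c log v) dv`. Hence
`φ(s) = e^{-s/c} f(s)` solves the linear equation `φ' = -(g / c) φ`, which gives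
`μ̂(z) = f(t) · exp((1/c) ∫₀ᵗ (g(r) - 1) dr)`. The second factor is the characteristic function of
the compound Poisson law with rate `t / c` whose jumps are distributed as `e^{-tUQ} W`, with `U`
uniform on `[0, 1]` and `W ~ ν`.
-/

lemma charFn_eq_charFun {d : ℕ} (μ : Measure (EuclideanSpace ℝ (Fin d)))
    (z : EuclideanSpace ℝ (Fin d)) : charFn μ z = charFun μ z := by
  simp only [charFn, charFun_apply, real_inner_comm z, mul_comm Complex.I]

section CompoundPoisson

variable {E : Type*} [NormedAddCommGroup E] [InnerProductSpace ℝ E] [MeasurableSpace E]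
  [BorelSpace E] [SecondCountableTopology E]

def convPow (κ : Measure E) : ℕ → Measure E
  | 0 => Measure.dirac 0
  | n + 1 => convPow κ n ∗ κ

instance isProbabilityMeasure_convPow (κ : Measure E) [IsProbabilityMeasure κ] (n : ℕ) :
    IsProbabilityMeasure (convPow κ n) := by
  induction n with
  | zero => exact Measure.dirac.isProbabilityMeasure
  | succ n ih => exact Measure.probabilitymeasure_of_probabilitymeasures_conv _ _

lemma charFun_convPow (κ : Measure E) [IsProbabilityMeasure κ] (n : ℕ) (z : E) :
    charFun (convPow κ n) z = charFun κ z ^ n := by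
  induction n with
  | zero => simp [convPow, charFun_dirac]
  | succ n ih => rw [convPow, charFun_conv, ih, pow_succ]

def compoundPoisson (r : ℝ≥0) (κ : Measure E) : Measure E :=
  Measure.sum fun n => poissonMeasure r {n} • convPow κ n

instance isProbabilityMeasure_compoundPoisson (r : ℝ≥0) (κ : Measure E) [IsProbabilityMeasure κ] :
    IsProbabilityMeasure (compoundPoisson r κ) := by
  constructor
  simpa [compoundPoisson] using (lintegral_countable' (μ := poissonMeasure r) 1).symm

lemma charFun_compoundPoisson (r : ℝ≥0) (κ : Measure E) [IsProbabilityMeasure κ] (z : E) :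
    charFun (compoundPoisson r κ) z = Complex.exp (r * (charFun κ z - 1)) := by
  have hint : Integrable (fun x : E => Complex.exp (⟪x, z⟫ * Complex.I)) (compoundPoisson r κ) :=
    (integrable_const (1 : ℝ)).mono (by fun_prop) (by simp)
  rw [charFun_apply, compoundPoisson, integral_sum_measure hint]
  simp_rw [integral_smul_measure, ← charFun_apply, charFun_convPow, ← measureReal_def,
    poissonMeasure_real_singleton]
  have hexp := (NormedSpace.expSeries_div_hasSum_exp ((r : ℂ) * charFun κ z)).mul_left
    (Complex.exp (-r))
  rw [← Complex.exp_eq_exp_ℂ, ← Complex.exp_add] at hexp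
  convert hexp.tsum_eq using 1
  · congr 1 with n
    rw [Complex.real_smul]
    push_cast
    ring
  · ring_nf

end CompoundPoisson

instance : IsProbabilityMeasure unif01 :=
  ⟨by simp [unif01]⟩

lemma integral_unif01 {F : Type*} [NormedAddCommGroup F] [NormedSpace ℝ F] (f : ℝ → F) :
    ∫ u, f u ∂unif01 = ∫ u in (0 : ℝ)..1, f u := by
  rw [intervalIntegral.integral_of_le zero_le_one, ← integral_Icc_eq_integral_Ioc, unif01]

section MatrixFlow

variable {d : ℕ}

def expAct (A : Matrix (Fin d) (Fin d) ℝ) (s : ℝ) (x : EuclideanSpace ℝ (Fin d)) :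
    EuclideanSpace ℝ (Fin d) :=
  WithLp.toLp 2 (NormedSpace.exp (s • A) *ᵥ x)

variable (A : Matrix (Fin d) (Fin d) ℝ)

lemma mAct_eq_expAct (u : ℝ) (x : EuclideanSpace ℝ (Fin d)) :
    mAct A u x = expAct A (Real.log u) x := rfl

lemma expAct_smul (c s : ℝ) (x : EuclideanSpace ℝ (Fin d)) :
    expAct (c • A) s x = expAct A (s * c) x := by
  rw [expAct, expAct, smul_smul]

lemma expAct_zero (x : EuclideanSpace ℝ (Fin d)) : expAct A 0 x = x := by
  simp [expAct]

lemma expAct_expAct (s r : ℝ) (x : EuclideanSpace ℝ (Fin d)) :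
    expAct A s (expAct A r x) = expAct A (s + r) x := by
  simp only [expAct, WithLp.ofLp_toLp, mulVec_mulVec, add_smul]
  rw [Matrix.exp_add_of_commute _ _ (((Commute.refl A).smul_left s).smul_right r)]

lemma inner_expAct (s : ℝ) (z x : EuclideanSpace ℝ (Fin d)) :
    ⟪z, expAct A s x⟫ = ⟪expAct Aᵀ s z, x⟫ := by
  simp only [expAct, EuclideanSpace.inner_eq_star_dotProduct, star_trivial]
  rw [← Matrix.transpose_smul, Matrix.exp_transpose, Matrix.mulVec_transpose, dotProduct_comm,
    Matrix.dotProduct_mulVec, dotProduct_comm]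

attribute [local instance] Matrix.linftyOpNormedAddCommGroup Matrix.linftyOpNormedRing
  Matrix.linftyOpNormedAlgebra in
lemma continuous_exp_smul : Continuous fun s : ℝ => NormedSpace.exp (s • A) := by
  have : CompleteSpace (Matrix (Fin d) (Fin d) ℝ) := FiniteDimensional.complete ℝ _
  exact NormedSpace.exp_continuous.comp (continuous_id.smul continuous_const)

@[fun_prop]
lemma continuous_expAct : Continuous fun p : ℝ × EuclideanSpace ℝ (Fin d) => expAct A p.1 p.2 :=
  (PiLp.continuous_toLp 2 _).comp (((continuous_exp_smul A).comp continuous_fst).matrix_mulVec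
    ((PiLp.continuous_ofLp 2 _).comp continuous_snd))

lemma charFun_map_prod_expAct (ρ : Measure ℝ) [IsFiniteMeasure ρ]
    (μ : Measure (EuclideanSpace ℝ (Fin d))) [IsFiniteMeasure μ] {φ : ℝ → ℝ} (hφ : Measurable φ)
    (z : EuclideanSpace ℝ (Fin d)) :
    charFun ((ρ.prod μ).map fun p => expAct A (φ p.1) p.2) z
      = ∫ u, charFun μ (expAct Aᵀ (φ u) z) ∂ρ := by
  have hmeas : Measurable fun p : ℝ × EuclideanSpace ℝ (Fin d) => expAct A (φ p.1) p.2 :=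
    (continuous_expAct A).measurable.comp ((hφ.comp measurable_fst).prodMk measurable_snd)
  rw [charFun_apply, integral_map hmeas.aemeasurable (by fun_prop),
    integral_prod _ ((integrable_const (1 : ℝ)).mono (by fun_prop) (by simp))]
  simp_rw [real_inner_comm z, inner_expAct, real_inner_comm _ (expAct _ _ z), charFun_apply]

lemma charFun_map_unif01_prod_expAct (ν : Measure (EuclideanSpace ℝ (Fin d))) [IsFiniteMeasure ν]
    {t : ℝ} (ht : t ≠ 0) (z : EuclideanSpace ℝ (Fin d)) :
    charFun ((unif01.prod ν).map fun p => expAct A (-(t * p.1)) p.2) z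
      = (∫ r in (0 : ℝ)..t, charFun ν (expAct Aᵀ (-r) z)) / t := by
  rw [charFun_map_prod_expAct A unif01 ν (φ := fun u => -(t * u)) (by fun_prop) z,
    integral_unif01,
    intervalIntegral.integral_comp_mul_left (fun r => charFun ν (expAct Aᵀ (-r) z)) ht,
    mul_zero, mul_one, Complex.real_smul, div_eq_inv_mul, Complex.ofReal_inv]

end MatrixFlow

lemma eq_mul_cexp_integral_of_hasDerivAt {φ k : ℝ → ℂ} (hk : Continuous k)
    (hφ : ∀ s, HasDerivAt φ (k s * φ s) s) (t : ℝ) :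
    φ t = φ 0 * Complex.exp (∫ s in (0 : ℝ)..t, k s) := by
  have hK (s : ℝ) : HasDerivAt (fun u => ∫ r in (0 : ℝ)..u, k r) (k s) s :=
    (hk.integral_hasStrictDerivAt 0 s).hasDerivAt
  have hconst (s : ℝ) :
      HasDerivAt (fun u => φ u * Complex.exp (-∫ r in (0 : ℝ)..u, k r)) 0 s := by
    refine ((hφ s).mul (hK s).neg.cexp).congr_deriv ?_
    simp only [Pi.neg_apply]
    ring
  have h := is_const_of_deriv_eq_zero (fun s => (hconst s).differentiableAt)
    (fun s => (hconst s).deriv) t 0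
  simp only [intervalIntegral.integral_same, neg_zero, Complex.exp_zero, mul_one] at h
  rw [← h, mul_assoc, ← Complex.exp_add, neg_add_cancel, Complex.exp_zero, mul_one]

lemma hasDerivAt_exp_mul_of_eq_integral_log {P f : ℝ → ℂ} {c C : ℝ} (hc : c ≠ 0)
    (hP : Continuous P) (hPC : ∀ r, ‖P r‖ ≤ C)
    (hf : ∀ s, f s = ∫ u in (0 : ℝ)..1, P (s - c * Real.log u)) (s : ℝ) :
    HasDerivAt (fun s => Real.exp (-s / c) * f s) (-(Real.exp (-s / c) / c) * P s) s := by
  set F : ℝ → ℂ := fun v => P (-(c * Real.log v))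
  have hF : Measurable F := hP.measurable.comp (measurable_const.mul Real.measurable_log).neg
  have hF_eq (s : ℝ) :
      (Real.exp (-s / c) : ℂ) * f s = ∫ v in (0 : ℝ)..Real.exp (-s / c), F v := by
    have hb := Real.exp_pos (-s / c)
    have hsub : ∫ u in (0 : ℝ)..1, P (s - c * Real.log u)
        = ∫ u in (0 : ℝ)..1, F (u * Real.exp (-s / c)) := by
      refine intervalIntegral.integral_congr_ae (Filter.Eventually.of_forall fun u hu => ?_)
      rw [Set.uIoc_of_le zero_le_one] at hu
      simp only [F, Real.log_mul hu.1.ne' hb.ne', Real.log_exp]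
      congr 1
      field_simp
      ring
    rw [hf, hsub, intervalIntegral.integral_comp_mul_right F hb.ne', zero_mul, one_mul,
      Complex.real_smul, ← mul_assoc, ← Complex.ofReal_mul, mul_inv_cancel₀ hb.ne',
      Complex.ofReal_one, one_mul]
  have hG : HasDerivAt (fun a => ∫ v in (0 : ℝ)..a, F v) (F (Real.exp (-s / c)))
      (Real.exp (-s / c)) := by
    refine intervalIntegral.integral_hasDerivAt_right ?_
      hF.stronglyMeasurable.stronglyMeasurableAtFilter
      (hP.continuousAt.comp (continuousAt_const.mul
        (Real.continuousAt_log (Real.exp_pos _).ne')).neg)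
    exact (intervalIntegrable_const (c := C)).mono_fun' hF.aestronglyMeasurable
      (Filter.Eventually.of_forall fun v => hPC _)
  have hexp : HasDerivAt (fun s => Real.exp (-s / c)) (Real.exp (-s / c) * (-1 / c)) s :=
    ((hasDerivAt_neg s).div_const c).exp
  rw [show (fun s => (Real.exp (-s / c) : ℂ) * f s) = _ from funext hF_eq]
  refine (hG.scomp s hexp).congr_deriv ?_
  simp only [F, Real.log_exp, Complex.real_smul]
  rw [show -(c * (-s / c)) = s by field_simp]
  push_cast
  ring

section Dickman

variable {d : ℕ} (Q : Matrix (Fin d) (Fin d) ℝ) {ν μ : Measure (EuclideanSpace ℝ (Fin d))}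
  [IsProbabilityMeasure ν] [IsProbabilityMeasure μ]

lemma IsOpDickman.charFun_eq_integral (hμ : IsOpDickman Q ν μ) (y : EuclideanSpace ℝ (Fin d)) :
    charFun μ y = ∫ u in (0 : ℝ)..1, charFun μ (mAct Qᵀ u y) * charFun ν (mAct Qᵀ u y) := by
  have hlaw : ((unif01.prod (μ ∗ ν)).map fun p => expAct Q (Real.log p.1) p.2) = μ := by
    have hadd : Measurable fun q : EuclideanSpace ℝ (Fin d) × EuclideanSpace ℝ (Fin d) =>
        q.1 + q.2 := by fun_prop
    rw [Measure.conv, ← Measure.map_id (μ := unif01), Measure.map_prod_map _ _ measurable_id hadd,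
      Measure.map_map (by fun_prop) (measurable_id.prodMap hadd)]
    exact hμ
  rw [← integral_unif01]
  conv_lhs => rw [← hlaw]
  rw [charFun_map_prod_expAct Q _ _ Real.measurable_log]
  simp_rw [charFun_conv]
  rfl

lemma IsOpDickman.charFun_expAct_eq_integral {c : ℝ} (hμ : IsOpDickman (c • Q) ν μ)
    (z : EuclideanSpace ℝ (Fin d)) (s : ℝ) :
    charFun μ (expAct Qᵀ (-s) z) = ∫ u in (0 : ℝ)..1,
      charFun μ (expAct Qᵀ (-(s - c * Real.log u)) z)
        * charFun ν (expAct Qᵀ (-(s - c * Real.log u)) z) := by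
  rw [hμ.charFun_eq_integral]
  congr with u
  rw [transpose_smul, mAct_eq_expAct, expAct_smul, expAct_expAct,
    show Real.log u * c + -s = -(s - c * Real.log u) by ring]

theorem IsOpDickman.charFun_eq_mul_cexp {c : ℝ} (hc : c ≠ 0) (hμ : IsOpDickman (c • Q) ν μ)
    (z : EuclideanSpace ℝ (Fin d)) (t : ℝ) :
    charFun μ z = charFun μ (expAct Qᵀ (-t) z)
      * Complex.exp ((∫ r in (0 : ℝ)..t, charFun ν (expAct Qᵀ (-r) z)) / c - t / c) := by
  have horbit : Continuous fun r : ℝ => expAct Qᵀ (-r) z :=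
    (continuous_expAct Qᵀ).comp (continuous_neg.prodMk continuous_const)
  have hg : Continuous fun r => charFun ν (expAct Qᵀ (-r) z) := continuous_charFun.comp horbit
  have hφ (s : ℝ) : HasDerivAt (fun s => Real.exp (-s / c) * charFun μ (expAct Qᵀ (-s) z))
      (-(1 / c) * charFun ν (expAct Qᵀ (-s) z)
        * (Real.exp (-s / c) * charFun μ (expAct Qᵀ (-s) z))) s := by
    refine (hasDerivAt_exp_mul_of_eq_integral_log hc
      (P := fun r => charFun μ (expAct Qᵀ (-r) z) * charFun ν (expAct Qᵀ (-r) z))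
      ((continuous_charFun.comp horbit).mul hg) (C := 1) (fun r => ?_)
      (hμ.charFun_expAct_eq_integral Q z) s).congr_deriv (by push_cast; ring)
    rw [norm_mul]
    exact mul_le_one₀ (norm_charFun_le_one _) (norm_nonneg _) (norm_charFun_le_one _)
  have h := eq_mul_cexp_integral_of_hasDerivAt
    (k := fun s => -(1 / c) * charFun ν (expAct Qᵀ (-s) z)) (continuous_const.mul hg) hφ t
  simp only [neg_zero, zero_div, Real.exp_zero, Complex.ofReal_one, one_mul, expAct_zero,
    intervalIntegral.integral_const_mul] at h
  set K := ∫ r in (0 : ℝ)..t, charFun ν (expAct Qᵀ (-r) z)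
  have hK : Complex.exp (-(1 / c) * K) * Complex.exp (K / c) = 1 := by
    rw [← Complex.exp_add, show -(1 / (c : ℂ)) * K + K / c = 0 by ring, Complex.exp_zero]
  push_cast at h
  rw [sub_eq_add_neg, Complex.exp_add, ← neg_div]
  linear_combination (-Complex.exp (K / c)) * h - charFun μ z * hK

end Dickman

theorem opDickman_selfdecomposable_general {d : ℕ} (Q : Matrix (Fin d) (Fin d) ℝ)
    (c : ℝ) (hc : 0 < c) (ν μ : Measure (EuclideanSpace ℝ (Fin d))) (hν : ClassH ν)
    [IsProbabilityMeasure μ] (hμ : IsOpDickman (c • Q) ν μ) :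
    ∀ t : ℝ, 0 < t → ∃ ρ : Measure (EuclideanSpace ℝ (Fin d)), IsProbabilityMeasure ρ ∧
      ∀ z : EuclideanSpace ℝ (Fin d),
        charFn μ z
          = charFn μ (WithLp.toLp 2 ((NormedSpace.exp ((-t) • Q.transpose)).mulVec z)) * charFn ρ z := by
  intro t ht
  have : IsProbabilityMeasure ν := hν.1
  set κ := (unif01.prod ν).map fun p => expAct Q (-(t * p.1)) p.2
  have : IsProbabilityMeasure κ := Measure.isProbabilityMeasure_map (by fun_prop)
  refine ⟨compoundPoisson (t / c).toNNReal κ, inferInstance, fun z => ?_⟩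
  change charFn μ z = charFn μ (expAct Qᵀ (-t) z) * _
  rw [charFn_eq_charFun, charFn_eq_charFun, charFn_eq_charFun, charFun_compoundPoisson,
    charFun_map_unif01_prod_expAct Q ν ht.ne', Real.coe_toNNReal _ (by positivity),
    hμ.charFun_eq_mul_cexp Q hc.ne' z t]
  have ht' : (t : ℂ) ≠ 0 := by exact_mod_cast ht.ne'
  congr 1
  push_cast
  field_simp

/-- Any operator Dickman distribution `D(cQ, ν)` with `c > 0` is `Q`-selfdecomposable: for every
`t > 0` there is a probability measure `ρ_t` with `μ̂(z) = μ̂(e^{-tQᵀ} z) ρ̂_t(z)` for all `z`. -/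
theorem opDickman_selfdecomposable {d : ℕ} (Q : Matrix (Fin d) (Fin d) ℝ) (hQ : MPlus Q)
    (c : ℝ) (hc : 0 < c) (ν μ : Measure (EuclideanSpace ℝ (Fin d))) (hν : ClassH ν)
    [IsProbabilityMeasure μ] (hμ : IsOpDickman (c • Q) ν μ) :
    ∀ t : ℝ, 0 < t → ∃ ρ : Measure (EuclideanSpace ℝ (Fin d)), IsProbabilityMeasure ρ ∧
      ∀ z : EuclideanSpace ℝ (Fin d),
        charFn μ z
          = charFn μ (WithLp.toLp 2 ((NormedSpace.exp ((-t) • Q.transpose)).mulVec z)) * charFn ρ z :=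
  opDickman_selfdecomposable_general Q c hc ν μ hν hμ

end
end

section
/- Let θ > 0, let μ be the Gamma distribution on ℝ with shape parameter θ and rate 1 (density x^{θ−1} e^{−x}/Γ(θ) on (0,∞)), and let ν be the exponential distribution with rate 1 (density e^{−x} on (0,∞)). Then μ satisfies the one-dimensional operator Dickman fixed-point equation with Q = 1/θ: if U is uniform on [0,1], X has law μ and W has law ν, all mutually independent, then the law of U^{1/θ}(X + W) equals μ. That is, the Gamma(θ,1) distribution is the Dickman-type distribution D(1/θ, Exp(1)). -/
open MeasureTheory ProbabilityTheory Matrix Filter Topology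

noncomputable section

/-! The law of `U^{1/θ}(X + W)` is the multiplicative convolution of the law of `U^{1/θ}` with
`Gamma(θ,1) ∗ Exp(1) = Gamma(θ+1,1)`. Its density at `t > 0` is
`∫₀¹ u^{-1/θ} f_{θ+1}(t u^{-1/θ}) du`, and the substitution `v = t u^{-1/θ}` turns this into
`t^{θ-1} ∫_t^∞ e^{-v} dv / Γ(θ) = f_θ(t)`. -/

open Real Set
open scoped ENNReal

instance isProbabilityMeasure_unif01 : IsProbabilityMeasure unif01 :=
  ⟨by simp [unif01]⟩

lemma unif01_eq_restrict_Ioo : unif01 = volume.restrict (Ioo 0 1) :=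
  Measure.restrict_congr_set Ioo_ae_eq_Icc.symm

lemma Real.mconv_volume_withDensity {μ : Measure ℝ} [SFinite μ] (hμ : μ {0} = 0)
    {g : ℝ → ℝ≥0∞} (hg : Measurable g) :
    μ ∗ₘ volume.withDensity g =
      volume.withDensity fun z ↦ ∫⁻ c, ENNReal.ofReal |c⁻¹| * g (c⁻¹ * z) ∂μ := by
  have hdens : Measurable fun p : ℝ × ℝ ↦ ENNReal.ofReal |p.1⁻¹| * g (p.1⁻¹ * p.2) := by
    fun_prop
  refine Measure.ext_of_lintegral _ fun φ hφ ↦ ?_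
  have hscale : ∀ c ≠ (0 : ℝ), ∫⁻ y, φ (c * y) ∂volume.withDensity g =
      ∫⁻ z, ENNReal.ofReal |c⁻¹| * g (c⁻¹ * z) * φ z := by
    intro c hc
    simp_rw [mul_assoc]
    rw [lintegral_const_mul _ (by fun_prop), ← smul_eq_mul, ← lintegral_smul_measure,
      ← Real.map_volume_mul_left hc, lintegral_map (by fun_prop) (measurable_const_mul c),
      lintegral_withDensity_eq_lintegral_mul _ hg (by fun_prop)]
    simp [inv_mul_cancel_left₀ hc]
  have hμ' : ∀ᵐ c ∂μ, c ≠ 0 := measure_eq_zero_iff_ae_notMem.mp hμ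
  rw [Measure.lintegral_mconv hφ, lintegral_congr_ae (hμ'.mono hscale), lintegral_lintegral_swap
      ((hdens.mul (hφ.comp measurable_snd)).aemeasurable),
    lintegral_withDensity_eq_lintegral_mul _ hdens.lintegral_prod_left' hφ]
  exact lintegral_congr fun z ↦
    lintegral_mul_const _ (hdens.comp (measurable_id.prodMk measurable_const))

lemma lintegral_exp_neg_mul_Ioi {r : ℝ} (hr : 0 < r) (t : ℝ) :
    ∫⁻ v in Ioi t, ENNReal.ofReal (exp (-(r * v))) = ENNReal.ofReal (exp (-(r * t)) / r) := by
  have h := integral_exp_mul_Ioi (neg_lt_zero.mpr hr) t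
  simp only [div_neg, neg_div, neg_neg, neg_mul] at h
  rw [← h, ofReal_integral_eq_lintegral_ofReal]
  · exact (exp_neg_integrableOn_Ioi t hr).congr_fun (fun v _ ↦ by simp only [neg_mul])
      measurableSet_Ioi
  · exact ae_of_all _ fun v ↦ (exp_pos _).le

namespace ProbabilityTheory

@[fun_prop]
lemma measurable_gammaPDF (a r : ℝ) : Measurable (gammaPDF a r) :=
  (measurable_gammaPDFReal a r).ennreal_ofReal

instance sFinite_gammaMeasure (a r : ℝ) : SFinite (gammaMeasure a r) := by
  rw [gammaMeasure]
  infer_instance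

instance sFinite_expMeasure (r : ℝ) : SFinite (expMeasure r) :=
  sFinite_gammaMeasure 1 r

lemma gammaPDF_lconvolution_gammaPDF_one {a r : ℝ} (ha : 0 < a) (hr : 0 ≤ r) :
    gammaPDF a r ⋆ₗ gammaPDF 1 r = gammaPDF (a + 1) r := by
  ext x
  rw [lconvolution_def]
  rcases lt_or_ge x 0 with hx | hx
  · refine (lintegral_eq_zero_of_ae_eq_zero ?_).trans (gammaPDF_of_neg hx).symm
    refine ae_of_all _ fun y ↦ ?_
    rcases lt_or_ge y 0 with hy | hy
    · simp [gammaPDF_of_neg hy]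
    · simp [gammaPDF_of_neg (by linarith : -y + x < 0)]
  set C := r ^ (a + 1) / Gamma a * exp (-(r * x))
  have hC : 0 ≤ C := by have := Gamma_pos_of_pos ha; positivity
  have hsupp : ∀ y, gammaPDF a r y * gammaPDF 1 r (-y + x) =
      (Icc 0 x).indicator (fun y ↦ ENNReal.ofReal (C * y ^ (a - 1))) y := by
    intro y
    by_cases hy : y ∈ Icc 0 x
    · rw [indicator_of_mem hy]
      obtain ⟨hy0, hyx⟩ := hy
      rw [gammaPDF_of_nonneg hy0, gammaPDF_of_nonneg (by linarith : 0 ≤ -y + x),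
        ← ENNReal.ofReal_mul (by have := Gamma_pos_of_pos ha; positivity)]
      congr 1
      simp only [C, Gamma_one, sub_self, rpow_zero, rpow_one,
        rpow_add' hr (by linarith : a + 1 ≠ 0)]
      rw [show -(r * x) = -(r * y) + -(r * (-y + x)) by ring, exp_add]
      ring
    · rw [indicator_of_notMem hy]
      rcases not_and_or.mp hy with hy | hy
      · simp [gammaPDF_of_neg (not_le.mp hy)]
      · simp [gammaPDF_of_neg (by linarith [not_le.mp hy] : -y + x < 0)]
  have hint : IntegrableOn (fun y ↦ C * y ^ (a - 1)) (Icc 0 x) := by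
    rw [integrableOn_Icc_iff_integrableOn_Ioc, ← intervalIntegrable_iff_integrableOn_Ioc_of_le hx]
    exact (intervalIntegral.intervalIntegrable_rpow' (by linarith)).const_mul C
  rw [lintegral_congr hsupp, lintegral_indicator measurableSet_Icc,
    ← ofReal_integral_eq_lintegral_ofReal hint
      ((ae_restrict_iff' measurableSet_Icc).mpr
        (ae_of_all _ fun y hy ↦ mul_nonneg hC (rpow_nonneg hy.1 _))),
    integral_Icc_eq_integral_Ioc, ← intervalIntegral.integral_of_le hx,
    intervalIntegral.integral_const_mul, integral_rpow (Or.inl (by linarith)),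
    gammaPDF_of_nonneg hx, Gamma_add_one ha.ne']
  congr 1
  simp only [C, sub_add_cancel, zero_rpow ha.ne', sub_zero, add_sub_cancel_right]
  field_simp

lemma lintegral_Ioo_rpow_mul_gammaPDF_add_one {a r t : ℝ} (ha : 0 < a) (hr : 0 < r)
    (ht : 0 < t) :
    ∫⁻ u in Ioo 0 1, ENNReal.ofReal (u ^ (-a⁻¹)) * gammaPDF (a + 1) r (u ^ (-a⁻¹) * t) =
      gammaPDF a r t := by
  set F : ℝ → ℝ := fun u ↦ u ^ (-a⁻¹) * t
  have hderiv : ∀ u ∈ Ioo (0 : ℝ) 1,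
      HasDerivWithinAt F (-a⁻¹ * u ^ (-a⁻¹ - 1) * t) (Ioo 0 1) u := fun u hu ↦
    ((hasDerivAt_rpow_const (Or.inl hu.1.ne')).mul_const t).hasDerivWithinAt
  have hanti : AntitoneOn F (Ioo 0 1) := fun u hu v _ huv ↦
    mul_le_mul_of_nonneg_right (rpow_le_rpow_of_nonpos hu.1 huv (by simp [ha.le])) ht.le
  have himage : F '' Ioo 0 1 = Ioi t := by
    ext v
    constructor
    · rintro ⟨u, hu, rfl⟩
      exact lt_mul_of_one_lt_left ht
        (one_lt_rpow_of_pos_of_lt_one_of_neg hu.1 hu.2 (by simpa using ha))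
    · intro (hv : t < v)
      have htv : 0 < t / v := div_pos ht (ht.trans hv)
      refine ⟨(t / v) ^ a, ⟨rpow_pos_of_pos htv a, rpow_lt_one htv.le
        ((div_lt_one (ht.trans hv)).mpr hv) ha⟩, ?_⟩
      simp only [F]
      rw [rpow_neg (rpow_nonneg htv.le a), rpow_rpow_inv htv.le ha.ne', inv_div,
        div_mul_cancel₀ _ ht.ne']
  set K := r ^ (a + 1) * t ^ (a - 1) / Gamma a
  have hintegrand : ∀ u ∈ Ioo (0 : ℝ) 1,
      ENNReal.ofReal (u ^ (-a⁻¹)) * gammaPDF (a + 1) r (u ^ (-a⁻¹) * t) =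
        ENNReal.ofReal (-(-a⁻¹ * u ^ (-a⁻¹ - 1) * t)) * ENNReal.ofReal (K * exp (-(r * F u))) := by
    intro u ⟨hu0, _⟩
    have hΓ := Gamma_pos_of_pos ha
    rw [gammaPDF_of_nonneg (by positivity), ← ENNReal.ofReal_mul (by positivity),
      ← ENNReal.ofReal_mul (by simp only [neg_mul, neg_neg]; positivity)]
    congr 1
    simp only [F, K]
    rw [add_sub_cancel_right, mul_rpow (by positivity) ht.le, ← rpow_mul hu0.le,
      neg_mul, inv_mul_cancel₀ ha.ne', rpow_neg_one, rpow_sub_one hu0.ne', rpow_sub_one ht.ne',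
      Gamma_add_one ha.ne']
    field_simp
  rw [setLIntegral_congr_fun measurableSet_Ioo hintegrand,
    ← lintegral_image_eq_lintegral_deriv_mul_of_antitoneOn measurableSet_Ioo hderiv hanti
      (fun v ↦ ENNReal.ofReal (K * exp (-(r * v)))), himage]
  simp_rw [ENNReal.ofReal_mul' (exp_pos _).le]
  rw [lintegral_const_mul' _ _ ENNReal.ofReal_ne_top, lintegral_exp_neg_mul_Ioi hr,
    ← ENNReal.ofReal_mul (by positivity), gammaPDF_of_nonneg ht.le]
  congr 1
  simp only [K]
  rw [rpow_add_one hr.ne']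
  field_simp

lemma gammaMeasure_conv_expMeasure {a r : ℝ} (ha : 0 < a) (hr : 0 ≤ r) :
    gammaMeasure a r ∗ expMeasure r = gammaMeasure (a + 1) r := by
  rw [expMeasure, gammaMeasure, gammaMeasure, conv_withDensity_eq_lconvolution
    (measurable_gammaPDF a r) (measurable_gammaPDF 1 r), gammaPDF_lconvolution_gammaPDF_one ha hr,
    gammaMeasure]

lemma map_rpow_unif01_mconv_gammaMeasure {a r : ℝ} (ha : 0 < a) (hr : 0 < r) :
    unif01.map (· ^ (1 / a)) ∗ₘ gammaMeasure (a + 1) r = gammaMeasure a r := by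
  have hpow : Measurable fun u : ℝ ↦ u ^ (1 / a) := by fun_prop
  have hIoo : ∀ᵐ u ∂unif01, u ∈ Ioo (0 : ℝ) 1 := by
    rw [unif01_eq_restrict_Ioo]
    exact ae_restrict_mem measurableSet_Ioo
  have hnull : unif01.map (· ^ (1 / a)) {0} = 0 := by
    rw [Measure.map_apply hpow (measurableSet_singleton 0)]
    exact measure_eq_zero_iff_ae_notMem.mpr (hIoo.mono fun u hu ↦ (rpow_pos_of_pos hu.1 _).ne')
  have hdensity : ∀ t ≠ 0, ∫⁻ c, ENNReal.ofReal |c⁻¹| * gammaPDF (a + 1) r (c⁻¹ * t)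
      ∂unif01.map (· ^ (1 / a)) = gammaPDF a r t := by
    intro t ht
    rw [lintegral_map (by fun_prop) hpow, unif01_eq_restrict_Ioo]
    have hpow_inv : ∀ u ∈ Ioo (0 : ℝ) 1, (u ^ (1 / a))⁻¹ = u ^ (-a⁻¹) := fun u hu ↦ by
      rw [rpow_neg hu.1.le, one_div]
    rw [setLIntegral_congr_fun measurableSet_Ioo fun u hu ↦ by
      rw [hpow_inv u hu, abs_of_pos (rpow_pos_of_pos hu.1 _)]]
    rcases ht.lt_or_gt with hneg | hpos
    · rw [gammaPDF_of_neg hneg, ← lintegral_zero]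
      refine setLIntegral_congr_fun measurableSet_Ioo fun u hu ↦ ?_
      rw [gammaPDF_of_neg (mul_neg_of_pos_of_neg (rpow_pos_of_pos hu.1 _) hneg), mul_zero]
    · exact lintegral_Ioo_rpow_mul_gammaPDF_add_one ha hr hpos
  rw [gammaMeasure, Real.mconv_volume_withDensity hnull (measurable_gammaPDF _ _), gammaMeasure]
  exact withDensity_congr_ae ((Measure.ae_ne volume 0).mono hdensity)

end ProbabilityTheory

/-- The Gamma(θ,1) distribution satisfies the one-dimensional operator Dickman fixed-point
equation with parameter `1/θ` and innovation law `Exp(1)`: the law of `U^{1/θ}(X + W)` equals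
Gamma(θ,1), for `U ~ Unif[0,1]`, `X ~ Gamma(θ,1)`, `W ~ Exp(1)` mutually independent. -/
theorem gamma_isDickman (θ : ℝ) (hθ : 0 < θ) :
    Measure.map (fun p : ℝ × (ℝ × ℝ) => p.1 ^ (1/θ) * (p.2.1 + p.2.2))
      (unif01.prod ((ProbabilityTheory.gammaMeasure θ 1).prod
        (ProbabilityTheory.expMeasure 1)))
      = ProbabilityTheory.gammaMeasure θ 1 := by
  calc _ = unif01.map (· ^ (1 / θ)) ∗ₘ (gammaMeasure θ 1 ∗ expMeasure 1) := by
        rw [Measure.mconv, Measure.conv, Measure.map_prod_map _ _ (by fun_prop) (by fun_prop),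
          Measure.map_map (by fun_prop) (by fun_prop)]
        rfl
    _ = gammaMeasure θ 1 := by
        rw [gammaMeasure_conv_expMeasure hθ zero_le_one,
          map_rpow_unif01_mconv_gammaMeasure hθ one_pos]

end
end
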